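/- Let a_1, …, a_r ≥ 2 be integers and let n ≥ a_1 + … + a_r. Set A = a_1 + … + a_r and define the integer polynomial P(X) = (1−X) · (1+X)^{n−A} · ∏_{i=1}^{r} (1+X^{a_i}). Then 2 · ∑_{j=0}^{⌊n/2⌋} (coeff of X^j in P)² = − (coefficient of X^{n+1} in (1−X)^2 · (1+X)^{2(n−A)} · ∏_{i=1}^{r} (1+X^{a_i})^2). -/

import Mathlib

open Polynomial Finset

private lemma natDeg_X_add_one : (X + 1 : ℤ[X]).natDegree = 1 := by
  simpa using natDegree_X_add_C (1 : ℤ)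

private lemma refl_one_sub : reflect 1 (1 - X : ℤ[X]) = -(1 - X) := by
  rw [reflect_sub, reflect_one, reflect_one_X]
  simp [pow_one]

private lemma refl_one_add_pow (k : ℕ) :
    reflect k ((1 + X : ℤ[X]) ^ k) = (1 + X) ^ k := by
  induction k with
  | zero => simp [reflect_one]
  | succ k ih =>
    rw [pow_succ, reflect_mul _ _ (le_trans (natDegree_pow_le) (by
        simp [natDeg_X_add_one, add_comm (1 : ℤ[X]) X])) (by
        rw [add_comm]; exact natDeg_X_add_one.le), ih]
    congr 1
    rw [reflect_add, reflect_one, reflect_one_X]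
    ring

private lemma refl_one_add_Xpow (m : ℕ) :
    reflect m (1 + X ^ m : ℤ[X]) = 1 + X ^ m := by
  rw [reflect_add, reflect_one, reflect_monomial, revAt_le le_rfl]
  simp [add_comm]

private lemma natDegree_one_add_Xpow (m : ℕ) :
    (1 + X ^ m : ℤ[X]).natDegree ≤ m := by
  refine le_trans (natDegree_add_le _ _) ?_
  simp [natDegree_X_pow]

private lemma refl_prod (r : ℕ) (a : Fin r → ℕ) (s : Finset (Fin r)) :
    reflect (∑ i ∈ s, a i) (∏ i ∈ s, (1 + X ^ (a i)) : ℤ[X]) =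
      ∏ i ∈ s, (1 + X ^ (a i)) := by
  classical
  induction s using Finset.induction_on with
  | empty => simp [reflect_one]
  | @insert x s hx ih =>
    rw [Finset.sum_insert hx, Finset.prod_insert hx,
      reflect_mul _ _ (natDegree_one_add_Xpow _)
        (le_trans (natDegree_prod_le _ _) (Finset.sum_le_sum
          (fun i _ => natDegree_one_add_Xpow (a i)))),
      refl_one_add_Xpow, ih]

private lemma natDegree_prod_one_add_Xpow (r : ℕ) (a : Fin r → ℕ) (s : Finset (Fin r)) :
    ((∏ i ∈ s, (1 + X ^ (a i)) : ℤ[X])).natDegree ≤ ∑ i ∈ s, a i :=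
  le_trans (natDegree_prod_le _ _) (Finset.sum_le_sum
    (fun i _ => natDegree_one_add_Xpow (a i)))

private lemma sym_sum (f : ℕ → ℤ) (n : ℕ) (hsym : ∀ j ≤ n + 1, f (n + 1 - j) = -f j) :
    ∑ j ∈ Finset.range (n + 2), (f j) ^ 2 =
      2 * ∑ j ∈ Finset.range (n / 2 + 1), (f j) ^ 2 := by
  have hg : ∀ j ≤ n + 1, f (n + 1 - j) ^ 2 = f j ^ 2 := by
    intro j hj; rw [hsym j hj]; ring
  have h1 : Finset.range (n + 2) = Finset.Ico 0 (n + 2) := by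
    rw [Finset.range_eq_Ico]
  rw [h1, ← Finset.sum_Ico_consecutive (fun j => f j ^ 2)
    (Nat.zero_le (n / 2 + 1)) (by omega)]
  have h2 : ∑ j ∈ Finset.Ico (n / 2 + 1) (n + 2), f j ^ 2
      = ∑ j ∈ Finset.Ico (n + 1 + 1 - (n + 2)) (n + 1 + 1 - (n / 2 + 1)), f j ^ 2 := by
    rw [← Finset.sum_Ico_reflect (fun j => f j ^ 2) (n / 2 + 1) (le_refl (n + 2))]
    refine Finset.sum_congr rfl ?_
    intro j hj
    rw [Finset.mem_Ico] at hj
    exact (hg j (by omega)).symm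
  rw [h2]
  have hlo : n + 1 + 1 - (n + 2) = 0 := by omega
  rcases Nat.even_or_odd n with he | ho
  · obtain ⟨m, hm⟩ := he
    have : n + 1 + 1 - (n / 2 + 1) = n / 2 + 1 := by omega
    rw [hlo, this, Finset.range_eq_Ico]
    ring
  · obtain ⟨m, hm⟩ := ho
    have hh : n + 1 + 1 - (n / 2 + 1) = n / 2 + 2 := by omega
    have hmid : f (n / 2 + 1) = 0 := by
      have h3 := hsym (n / 2 + 1) (by omega)
      have heq : n + 1 - (n / 2 + 1) = n / 2 + 1 := by omega
      rw [heq] at h3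
      linarith
    have h4 : ∑ j ∈ Finset.range (n / 2 + 2), f j ^ 2
        = ∑ j ∈ Finset.range (n / 2 + 1), f j ^ 2 := by
      rw [Finset.sum_range_succ, hmid]
      ring
    rw [hlo, hh, ← Finset.range_eq_Ico, ← Finset.range_eq_Ico, h4, Finset.range_eq_Ico]
    ring

/-- Lemma 2 of the paper in constant-term form: for `a_i ≥ 2`, `A = ∑ a_i ≤ n` and
`P = (1−X)(1+X)^{n−A} ∏(1+X^{a_i})`, twice the sum of the squares of the coefficients
of `P` up to `⌊n/2⌋` equals minus the coefficient of `X^(n+1)` in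
`(1−X)^2 (1+X)^{2(n−A)} ∏(1+X^{a_i})^2`. -/
theorem stmt_3 (r : ℕ) (a : Fin r → ℕ) (ha : ∀ i, 2 ≤ a i)
    (n : ℕ) (hn : (∑ i, a i) ≤ n)
    (P : ℤ[X])
    (hP : P = (1 - X) * (1 + X) ^ (n - ∑ i, a i) * ∏ i, (1 + X ^ (a i))) :
    2 * ∑ j ∈ Finset.range (n / 2 + 1), (P.coeff j) ^ 2 =
      -(((1 - X) ^ 2 * (1 + X) ^ (2 * (n - ∑ i, a i)) *
          ∏ i, (1 + X ^ (a i)) ^ 2 : ℤ[X]).coeff (n + 1)) := by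
  set A := ∑ i, a i with hA
  -- the big polynomial is P ^ 2
  have hQ : ((1 - X) ^ 2 * (1 + X) ^ (2 * (n - A)) *
      ∏ i, (1 + X ^ (a i)) ^ 2 : ℤ[X]) = P * P := by
    rw [hP, Finset.prod_pow, mul_comm 2 (n - A), pow_mul]
    ring
  -- reflection identity
  have hrefl : reflect (n + 1) P = -P := by
    have hsplit : n + 1 = (1 + (n - A)) + A := by omega
    rw [hP, hsplit,
      reflect_mul _ _ (le_trans (natDegree_mul_le)
        (add_le_add (by rw [natDegree_sub_eq_right_of_natDegree_lt (by simp)]; simp)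
          (le_trans natDegree_pow_le (by
            simp [natDeg_X_add_one, add_comm (1 : ℤ[X]) X]))))
        (natDegree_prod_one_add_Xpow r a Finset.univ),
      reflect_mul _ _ (by
          rw [natDegree_sub_eq_right_of_natDegree_lt (by simp)]; simp) (le_trans
          natDegree_pow_le (by simp [natDeg_X_add_one, add_comm (1 : ℤ[X]) X])),
      refl_one_sub, refl_one_add_pow, refl_prod]
    ring
  have hsym : ∀ j ≤ n + 1, P.coeff (n + 1 - j) = -P.coeff j := by
    intro j hj
    have := congrArg (fun q => Polynomial.coeff q j) hrefl
    simpa [coeff_reflect, revAt_le hj] using this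
  rw [hQ, Polynomial.coeff_mul, Finset.Nat.sum_antidiagonal_eq_sum_range_succ_mk]
  have : ∑ j ∈ Finset.range (n + 1 + 1), P.coeff j * P.coeff (n + 1 - j)
      = -∑ j ∈ Finset.range (n + 2), (P.coeff j) ^ 2 := by
    rw [← Finset.sum_neg_distrib]
    refine Finset.sum_congr rfl ?_
    intro j hj
    rw [Finset.mem_range] at hj
    rw [hsym j (by omega)]
    ring
  rw [this, neg_neg, sym_sum (fun j => P.coeff j) n hsym]
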